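/- arXiv:1708.01855 — 6 statements merged into one kernel-verified Lean document; each statement's English description precedes it below -/
import Mathlib

section
/- The infimal sum of two Young diagrams is a Young diagram. That is, if X and Y are Young diagrams in Z_+^2, then X ⊞ Y = (X^c + Y^c)^c is a Young diagram, where X^c = Z_+^2 \ X and the sum of sets is the Minkowski sum. -/
open Pointwise

/-- A Young diagram in `ℤ₊² = ℕ × ℕ`: downward closed under the coordinatewise order. -/
def IsYoung (S : Set (ℕ × ℕ)) : Prop :=
  ∀ p q : ℕ × ℕ, q ∈ S → p.1 ≤ q.1 → p.2 ≤ q.2 → p ∈ S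

/-- Infimal sum `X ⊞ Y = (Xᶜ + Yᶜ)ᶜ`, with Minkowski sum of sets. -/
def boxSum (X Y : Set (ℕ × ℕ)) : Set (ℕ × ℕ) := (Xᶜ + Yᶜ)ᶜ

theorem boxSum_isYoung (X Y : Set (ℕ × ℕ)) (hX : IsYoung X) (hY : IsYoung Y) :
    IsYoung (boxSum X Y) := by
  intro p q hq h1 h2
  intro hp
  apply hq
  rcases hp with ⟨a, ha, b, hb, hab⟩
  refine ⟨(a.1 + (q.1 - p.1), a.2 + (q.2 - p.2)), ?_, b, hb, ?_⟩
  · intro haX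
    exact ha (hX a _ haX (Nat.le_add_right _ _) (Nat.le_add_right _ _))
  · have h1' : a.1 + b.1 = p.1 := congrArg Prod.fst hab
    have h2' : a.2 + b.2 = p.2 := congrArg Prod.snd hab
    ext <;> simp <;> omega
end

section
/- The infimal difference Z ⊟ Y of two Young diagrams satisfies Z ⊆ (Z ⊟ Y) ⊞ Y; that is, Z ⊟ Y is itself an element of Δ(Z,Y). -/
open Pointwise

/-- `Δ(Z,Y)`: the collection of Young diagrams `X` with `Z ⊆ X ⊞ Y`. -/
def Delta (Z Y : Set (ℕ × ℕ)) : Set (Set (ℕ × ℕ)) :=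
  {X | IsYoung X ∧ Z ⊆ boxSum X Y}

/-- Infimal difference `Z ⊟ Y = ⋂_{X ∈ Δ(Z,Y)} X`. -/
def boxDiff (Z Y : Set (ℕ × ℕ)) : Set (ℕ × ℕ) := ⋂₀ Delta Z Y

/-- `Z ⊟ Y` is itself an element of `Δ(Z,Y)`. -/
theorem boxDiff_mem_Delta (Y Z : Set (ℕ × ℕ)) (hY : IsYoung Y) (hZ : IsYoung Z) :
    boxDiff Z Y ∈ Delta Z Y := by
  constructor
  · intro p q hq hp1 hp2
    intro X hX
    exact hX.1 p q (hq X hX) hp1 hp2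
  · intro z hz hmem
    obtain ⟨a, ha, b, hb, hab⟩ := hmem
    simp only [boxDiff, Set.mem_compl_iff, Set.mem_sInter, not_forall] at ha
    obtain ⟨X, hXa⟩ := ha
    
    obtain ⟨hXΔ, haX⟩ := hXa
    exact hXΔ.2 hz ⟨a, haX, b, hb, hab⟩
end

section
/- In enhanced neighborhood growth initialized from the empty set, the occupied set at every time t is a Young diagram. -/
/-- Number of points of `A` on the horizontal line through `p`. -/
noncomputable def rowCount (A : Set (ℕ × ℕ)) (p : ℕ × ℕ) : ℕ :=
  {k : ℕ | (k, p.2) ∈ A}.ncard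

/-- Number of points of `A` on the vertical line through `p`. -/
noncomputable def colCount (A : Set (ℕ × ℕ)) (p : ℕ × ℕ) : ℕ :=
  {k : ℕ | (p.1, k) ∈ A}.ncard

/-- Enhanced neighborhood growth transformation with zero-set `Z` and
enhancements `r` (row) and `c` (column). -/
noncomputable def Ten (Z : Set (ℕ × ℕ)) (r c : ℕ → ℕ) (A : Set (ℕ × ℕ)) :
    Set (ℕ × ℕ) :=
  A ∪ {p | (rowCount A p + r p.2, colCount A p + c p.1) ∉ Z}

theorem enhanced_young (Z : Set (ℕ × ℕ)) (hZfin : Z.Finite) (hZ : IsYoung Z)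
    (r c : ℕ → ℕ) (hr : Antitone r) (hc : Antitone c) (t : ℕ) :
    IsYoung ((Ten Z r c)^[t] ∅) := by
  induction t with
  | zero => intro p q hq _ _; simp at hq
  | succ n ih =>
    rw [Function.iterate_succ_apply']
    intro p q hq h1 h2
    set A := (Ten Z r c)^[n] ∅ with hA
    rcases hq with hq | hq
    · exact Or.inl (ih p q hq h1 h2)
    · by_cases hp : p ∈ A
      · exact Or.inl hp
      · right
        have hrowfin : {k : ℕ | (k, p.2) ∈ A}.Finite := by
          apply Set.Finite.subset (Set.finite_Iio p.1)
          intro k hk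
          simp only [Set.mem_Iio]; by_contra hlt
          push_neg at hlt
          exact hp (ih p (k, p.2) hk hlt le_rfl)
        have hcolfin : {k : ℕ | (p.1, k) ∈ A}.Finite := by
          apply Set.Finite.subset (Set.finite_Iio p.2)
          intro k hk
          simp only [Set.mem_Iio]; by_contra hlt
          push_neg at hlt
          exact hp (ih p (p.1, k) hk le_rfl hlt)
        have hrowsub : {k : ℕ | (k, q.2) ∈ A} ⊆ {k : ℕ | (k, p.2) ∈ A} := by
          intro k hk
          exact ih (k, p.2) (k, q.2) hk le_rfl h2
        have hcolsub : {k : ℕ | (q.1, k) ∈ A} ⊆ {k : ℕ | (p.1, k) ∈ A} := by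
          intro k hk
          exact ih (p.1, k) (q.1, k) hk h1 le_rfl
        have hrle : rowCount A q ≤ rowCount A p :=
          Set.ncard_le_ncard hrowsub hrowfin
        have hcle : colCount A q ≤ colCount A p :=
          Set.ncard_le_ncard hcolsub hcolfin
        intro hmem
        exact hq (hZ _ _ hmem (add_le_add hrle (hr h2)) (add_le_add hcle (hc h1)))
end

section
/- Let I_0, ..., I_M be the maximal intervals of indices i on which c_i is constant, and J_0, ..., J_N the maximal intervals of indices j on which r_j is constant. If the enhancements span, then for all t ≥ 0, the union of I_i × J_j over all pairs with i + j < t is contained in A_t. -/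
lemma young_not {Z : Set (ℕ × ℕ)} (hZ : IsYoung Z) {a b a' b' : ℕ}
    (h : (a, b) ∉ Z) (ha : a ≤ a') (hb : b ≤ b') : (a', b') ∉ Z :=
  fun hm => h (hZ (a, b) (a', b') hm ha hb)

lemma subset_Ten (Z : Set (ℕ × ℕ)) (r c : ℕ → ℕ) (A : Set (ℕ × ℕ)) :
    A ⊆ Ten Z r c A := Set.subset_union_left

lemma iter_mono (Z : Set (ℕ × ℕ)) (r c : ℕ → ℕ) {s t : ℕ} (h : s ≤ t) :
    (Ten Z r c)^[s] ∅ ⊆ (Ten Z r c)^[t] ∅ := by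
  induction t with
  | zero =>
    have : s = 0 := Nat.le_zero.mp h
    subst this; exact Set.Subset.rfl
  | succ t ih =>
    rcases Nat.lt_or_ge s (t + 1) with h' | h'
    · refine (ih (Nat.lt_succ_iff.mp h')).trans ?_
      rw [Function.iterate_succ_apply']
      exact subset_Ten ..
    · have : s = t + 1 := le_antisymm h h'
      subst this; exact Set.Subset.rfl

lemma mem_Ten_iff {Z : Set (ℕ × ℕ)} {r c : ℕ → ℕ} {A : Set (ℕ × ℕ)} {i j : ℕ} :
    (i, j) ∈ Ten Z r c A ↔ (i, j) ∈ A ∨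
      (rowCount A (i, j) + r j, colCount A (i, j) + c i) ∉ Z := by
  simp [Ten, Set.mem_union, Set.mem_setOf_eq]

lemma rowCount_eq {A : Set (ℕ × ℕ)} {i j : ℕ} :
    rowCount A (i, j) = {k : ℕ | (k, j) ∈ A}.ncard := rfl

lemma colCount_eq {A : Set (ℕ × ℕ)} {i j : ℕ} :
    colCount A (i, j) = {k : ℕ | (i, k) ∈ A}.ncard := rfl

/-- Up-closure: membership in `A_t` depends monotonically on the values `c i`, `r j`. -/
lemma upc {Z : Set (ℕ × ℕ)} (hZ : IsYoung Z) {r c : ℕ → ℕ}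
    (hrfin : {j | r j ≠ 0}.Finite) (hcfin : {i | c i ≠ 0}.Finite) :
    ∀ t : ℕ, ∀ {i j i' j' : ℕ}, c i ≤ c i' → r j ≤ r j' →
      (i, j) ∈ (Ten Z r c)^[t] ∅ → (i', j') ∈ (Ten Z r c)^[t] ∅ := by
  intro t
  induction t with
  | zero => intro i j i' j' _ _ h; exact absurd h (Set.notMem_empty _)
  | succ t ih =>
    intro i j i' j' hci hrj h
    rw [Function.iterate_succ_apply'] at h ⊢
    set A := (Ten Z r c)^[t] ∅ with hA
    rw [mem_Ten_iff] at h
    rw [mem_Ten_iff]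
    rcases h with h | h
    · exact Or.inl (ih hci hrj h)
    · by_cases hrow : {k : ℕ | (k, j') ∈ A}.Finite
      · by_cases hcol : {k : ℕ | (i', k) ∈ A}.Finite
        · refine Or.inr ?_
          have hrsub : {k : ℕ | (k, j) ∈ A} ⊆ {k : ℕ | (k, j') ∈ A} :=
            fun k hk => ih le_rfl hrj hk
          have hcsub : {k : ℕ | (i, k) ∈ A} ⊆ {k : ℕ | (i', k) ∈ A} :=
            fun k hk => ih hci le_rfl hk
          have h1 : rowCount A (i, j) ≤ rowCount A (i', j') := by
            rw [rowCount_eq, rowCount_eq]; exact Set.ncard_le_ncard hrsub hrow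
          have h2 : colCount A (i, j) ≤ colCount A (i', j') := by
            rw [colCount_eq, colCount_eq]; exact Set.ncard_le_ncard hcsub hcol
          exact young_not hZ h (add_le_add h1 hrj) (add_le_add h2 hci)
        · -- infinite column at i' : it contains some k with r k = 0
          have hinf : {k : ℕ | (i', k) ∈ A}.Infinite := hcol
          obtain ⟨k, hk⟩ := (hinf.diff hrfin).nonempty
          have hk0 : r k = 0 := by
            have := hk.2; simp only [Set.mem_setOf_eq] at this; exact not_not.mp this
          refine Or.inl (ih (le_rfl : c i' ≤ c i') ?_ hk.1)
          rw [hk0]; exact Nat.zero_le _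
      · -- infinite row at j' : it contains some k with c k = 0
        have hinf : {k : ℕ | (k, j') ∈ A}.Infinite := hrow
        obtain ⟨k, hk⟩ := (hinf.diff hcfin).nonempty
        have hk0 : c k = 0 := by
          have := hk.2; simp only [Set.mem_setOf_eq] at this; exact not_not.mp this
        refine Or.inl (ih ?_ (le_rfl : r j' ≤ r j') hk.1)
        rw [hk0]; exact Nat.zero_le _

/-- At the moment a point first enters, its row and column are contained in
the index sets with strictly larger enhancement values; hence the key
non-membership in `Z`. -/
lemma firstEntry {Z : Set (ℕ × ℕ)} (hZ : IsYoung Z) {r c : ℕ → ℕ}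
    (hrfin : {j | r j ≠ 0}.Finite) (hcfin : {i | c i ≠ 0}.Finite)
    (hspan : ∀ p : ℕ × ℕ, ∃ t, p ∈ (Ten Z r c)^[t] ∅) (i j : ℕ) :
    ({k : ℕ | c i < c k}.ncard + r j, {k : ℕ | r j < r k}.ncard + c i) ∉ Z := by
  classical
  have hex := hspan (i, j)
  set T := Nat.find hex with hT
  have hspec : (i, j) ∈ (Ten Z r c)^[T] ∅ := Nat.find_spec hex
  have hT0 : T ≠ 0 := by
    intro h0
    rw [h0] at hspec
    exact Set.notMem_empty _ hspec
  obtain ⟨m, hm⟩ := Nat.exists_eq_succ_of_ne_zero hT0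
  have hnot : (i, j) ∉ (Ten Z r c)^[m] ∅ :=
    Nat.find_min hex (by omega)
  rw [hm, Function.iterate_succ_apply', mem_Ten_iff] at hspec
  set A := (Ten Z r c)^[m] ∅ with hA
  rcases hspec with h | h
  · exact absurd h hnot
  · have hrsub : {k : ℕ | (k, j) ∈ A} ⊆ {k : ℕ | c i < c k} := by
      intro k hk
      by_contra hcon
      exact hnot (upc hZ hrfin hcfin m (not_lt.mp hcon) le_rfl hk)
    have hcsub : {k : ℕ | (i, k) ∈ A} ⊆ {k : ℕ | r j < r k} := by
      intro k hk
      by_contra hcon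
      exact hnot (upc hZ hrfin hcfin m le_rfl (not_lt.mp hcon) hk)
    have hrfin' : {k : ℕ | c i < c k}.Finite :=
      hcfin.subset (fun k hk => by simp only [Set.mem_setOf_eq] at hk ⊢; omega)
    have hcfin' : {k : ℕ | r j < r k}.Finite :=
      hrfin.subset (fun k hk => by simp only [Set.mem_setOf_eq] at hk ⊢; omega)
    have h1 : rowCount A (i, j) ≤ {k : ℕ | c i < c k}.ncard := by
      rw [rowCount_eq]; exact Set.ncard_le_ncard hrsub hrfin'
    have h2 : colCount A (i, j) ≤ {k : ℕ | r j < r k}.ncard := by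
      rw [colCount_eq]; exact Set.ncard_le_ncard hcsub hcfin'
    exact young_not hZ h (add_le_add h1 le_rfl) (add_le_add h2 le_rfl)

lemma range_finite {c : ℕ → ℕ} (hcfin : {i | c i ≠ 0}.Finite) :
    (Set.range c).Finite := by
  have hsub : Set.range c ⊆ insert 0 (c '' {i | c i ≠ 0}) := by
    rintro v ⟨k, rfl⟩
    by_cases h : c k = 0
    · rw [h]; exact Set.mem_insert _ _
    · exact Set.mem_insert_of_mem _ ⟨k, h, rfl⟩
  exact ((hcfin.image c).insert 0).subset hsub

/-- The value-index strictly drops when the value strictly increases. -/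
lemma idx_lt {c : ℕ → ℕ} (hcfin : {i | c i ≠ 0}.Finite) {i k : ℕ}
    (hk : c i < c k) :
    {v | v ∈ Set.range c ∧ c k < v}.ncard < {v | v ∈ Set.range c ∧ c i < v}.ncard := by
  have hfin : {v | v ∈ Set.range c ∧ c i < v}.Finite :=
    (range_finite hcfin).subset (fun v hv => hv.1)
  have hss : {v | v ∈ Set.range c ∧ c k < v} ⊂ {v | v ∈ Set.range c ∧ c i < v} := by
    constructor
    · intro v hv; exact ⟨hv.1, lt_trans hk hv.2⟩
    · intro hsup
      have hmem : c k ∈ {v | v ∈ Set.range c ∧ c i < v} := ⟨⟨k, rfl⟩, hk⟩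
      exact absurd (hsup hmem).2 (lt_irrefl _)
  exact Set.ncard_lt_ncard hss hfin

lemma main_lemma {Z : Set (ℕ × ℕ)} (hZ : IsYoung Z) {r c : ℕ → ℕ}
    (hrfin : {j | r j ≠ 0}.Finite) (hcfin : {i | c i ≠ 0}.Finite)
    (hspan : ∀ p : ℕ × ℕ, ∃ t, p ∈ (Ten Z r c)^[t] ∅) :
    ∀ n : ℕ, ∀ i j : ℕ,
      {v | v ∈ Set.range c ∧ c i < v}.ncard
        + {v | v ∈ Set.range r ∧ r j < v}.ncard ≤ n →
      (i, j) ∈ (Ten Z r c)^[n + 1] ∅ := by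
  intro n
  induction n using Nat.strong_induction_on with
  | _ n ih =>
    intro i j hn
    rw [Function.iterate_succ_apply', mem_Ten_iff]
    set A := (Ten Z r c)^[n] ∅ with hA
    by_cases hrow : {k : ℕ | (k, j) ∈ A}.Finite
    · by_cases hcol : {k : ℕ | (i, k) ∈ A}.Finite
      · refine Or.inr ?_
        have hrsub : {k : ℕ | c i < c k} ⊆ {k : ℕ | (k, j) ∈ A} := by
          intro k hk
          simp only [Set.mem_setOf_eq] at hk
          have hklt := idx_lt hcfin hk
          have hstep := ih ({v | v ∈ Set.range c ∧ c k < v}.ncard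
            + {v | v ∈ Set.range r ∧ r j < v}.ncard) (by omega) k j le_rfl
          exact iter_mono Z r c (by omega) hstep
        have hcsub : {k : ℕ | r j < r k} ⊆ {k : ℕ | (i, k) ∈ A} := by
          intro k hk
          simp only [Set.mem_setOf_eq] at hk
          have hklt := idx_lt hrfin hk
          have hstep := ih ({v | v ∈ Set.range c ∧ c i < v}.ncard
            + {v | v ∈ Set.range r ∧ r k < v}.ncard) (by omega) i k le_rfl
          exact iter_mono Z r c (by omega) hstep
        have h1 : {k : ℕ | c i < c k}.ncard ≤ rowCount A (i, j) := by
          rw [rowCount_eq]; exact Set.ncard_le_ncard hrsub hrow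
        have h2 : {k : ℕ | r j < r k}.ncard ≤ colCount A (i, j) := by
          rw [colCount_eq]; exact Set.ncard_le_ncard hcsub hcol
        exact young_not hZ (firstEntry hZ hrfin hcfin hspan i j)
          (add_le_add h1 le_rfl) (add_le_add h2 le_rfl)
      · have hinf : {k : ℕ | (i, k) ∈ A}.Infinite := hcol
        obtain ⟨k, hk⟩ := (hinf.diff hrfin).nonempty
        have hk0 : r k = 0 := by
          have := hk.2; simp only [Set.mem_setOf_eq] at this; exact not_not.mp this
        refine Or.inl (upc hZ hrfin hcfin n (le_rfl : c i ≤ c i) ?_ hk.1)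
        rw [hk0]; exact Nat.zero_le _
    · have hinf : {k : ℕ | (k, j) ∈ A}.Infinite := hrow
      obtain ⟨k, hk⟩ := (hinf.diff hcfin).nonempty
      have hk0 : c k = 0 := by
        have := hk.2; simp only [Set.mem_setOf_eq] at this; exact not_not.mp this
      refine Or.inl (upc hZ hrfin hcfin n ?_ (le_rfl : r j ≤ r j) hk.1)
      rw [hk0]; exact Nat.zero_le _

/-- Since `c` is weakly decreasing, the maximal intervals of constancy of `c` are
exactly its level sets, and the index of the interval containing `i` (intervals ordered
from the left) is the number of distinct values of `c` exceeding `c i`; similarly for `r`.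
Lemma: `⋃_{i+j<t} I_i × J_j ⊆ A_t`. -/
theorem enhanced_partition (Z : Set (ℕ × ℕ)) (hZfin : Z.Finite) (hZ : IsYoung Z)
    (r c : ℕ → ℕ) (hr : Antitone r) (hc : Antitone c)
    (hrfin : {j | r j ≠ 0}.Finite) (hcfin : {i | c i ≠ 0}.Finite)
    (hspan : ∀ p : ℕ × ℕ, ∃ t, p ∈ (Ten Z r c)^[t] ∅)
    (t i j : ℕ)
    (hlt : {v | v ∈ Set.range c ∧ c i < v}.ncard
         + {v | v ∈ Set.range r ∧ r j < v}.ncard < t) :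
    (i, j) ∈ (Ten Z r c)^[t] ∅ := by
  have h := main_lemma hZ hrfin hcfin hspan
    ({v | v ∈ Set.range c ∧ c i < v}.ncard
      + {v | v ∈ Set.range r ∧ r j < v}.ncard) i j le_rfl
  exact iter_mono Z r c (by omega) h
end

section
/- For the rectangular zero-set Z = R_{m,n} with m > n ≥ 1, every finite spanning set spans in at most 2n steps: if A is finite and ∪_t T^t(A) = Z_+^2, then T^{2n}(A) = Z_+^2. -/
/-- Neighborhood growth transformation with zero-set `Z`. -/
noncomputable def T (Z : Set (ℕ × ℕ)) (A : Set (ℕ × ℕ)) : Set (ℕ × ℕ) :=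
  A ∪ {p | (rowCount A p, colCount A p) ∉ Z}

/-- Horizontal line through `x`. -/
def Lh (x : ℕ × ℕ) : Set (ℕ × ℕ) := {p | p.2 = x.2}

/-- Vertical line through `x`. -/
def Lv (x : ℕ × ℕ) : Set (ℕ × ℕ) := {p | p.1 = x.1}

/-- The rectangle `R_{m,n} = [0,m-1] × [0,n-1]`. -/
def Rect (m n : ℕ) : Set (ℕ × ℕ) := {p | p.1 < m ∧ p.2 < n}

namespace RectAux

/-- A-points on row `c`. -/
def Arow (A : Set (ℕ × ℕ)) (c : ℕ) : Set ℕ := {k | (k, c) ∈ A}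

/-- A-points on column `x`. -/
def Acol (A : Set (ℕ × ℕ)) (x : ℕ) : Set ℕ := {k | (x, k) ∈ A}

/-- Rows that fire given full columns `V`. -/
noncomputable def Gm (m : ℕ) (A : Set (ℕ × ℕ)) (V : Set ℕ) : Set ℕ :=
  {c | m ≤ (V ∪ Arow A c).ncard}

/-- Columns that fire given full rows `H`. -/
noncomputable def Fn (n : ℕ) (A : Set (ℕ × ℕ)) (H : Set ℕ) : Set ℕ :=
  {x | n ≤ (H ∪ Acol A x).ncard}

/-- The state dynamics: (full rows, full columns). -/
noncomputable def st (m n : ℕ) (A : Set (ℕ × ℕ)) : ℕ → Set ℕ × Set ℕ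
  | 0 => (∅, ∅)
  | t + 1 => (Gm m A (st m n A t).2, Fn n A (st m n A t).1)

/-- The set described by a state. -/
def SS (A : Set (ℕ × ℕ)) (H V : Set ℕ) : Set (ℕ × ℕ) :=
  A ∪ {p | p.2 ∈ H} ∪ {p | p.1 ∈ V}

/-- Termination condition. -/
noncomputable def Done (m n : ℕ) (A : Set (ℕ × ℕ)) (t : ℕ) : Prop :=
  n ≤ ((st m n A t).1).ncard ∨ m ≤ ((st m n A t).2).ncard

variable {m n : ℕ} {A : Set (ℕ × ℕ)}

lemma mem_Arow {c k : ℕ} : k ∈ Arow A c ↔ (k, c) ∈ A := Iff.rfl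
lemma mem_Acol {x k : ℕ} : k ∈ Acol A x ↔ (x, k) ∈ A := Iff.rfl
lemma mem_Gm {V : Set ℕ} {c : ℕ} : c ∈ Gm m A V ↔ m ≤ (V ∪ Arow A c).ncard := Iff.rfl
lemma mem_Fn {H : Set ℕ} {x : ℕ} : x ∈ Fn n A H ↔ n ≤ (H ∪ Acol A x).ncard := Iff.rfl

lemma stH_succ (t : ℕ) : (st m n A (t + 1)).1 = Gm m A (st m n A t).2 := rfl
lemma stV_succ (t : ℕ) : (st m n A (t + 1)).2 = Fn n A (st m n A t).1 := rfl

lemma mem_SS {H V : Set ℕ} {p : ℕ × ℕ} :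
    p ∈ SS A H V ↔ p ∈ A ∨ p.2 ∈ H ∨ p.1 ∈ V := by
  simp [SS, or_assoc]

lemma SS_mono {H H' V V' : Set ℕ} (hH : H ⊆ H') (hV : V ⊆ V') :
    SS A H V ⊆ SS A H' V' := by
  intro p hp
  rw [mem_SS] at hp ⊢
  rcases hp with h | h | h
  exacts [Or.inl h, Or.inr (Or.inl (hH h)), Or.inr (Or.inr (hV h))]

lemma rowCount_SS {H V : Set ℕ} {p : ℕ × ℕ} (hp : p.2 ∉ H) :
    rowCount (SS A H V) p = (V ∪ Arow A p.2).ncard := by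
  unfold rowCount
  congr 1
  ext k
  simp only [Set.mem_setOf_eq, Set.mem_union, mem_SS, mem_Arow]
  tauto

lemma colCount_SS {H V : Set ℕ} {p : ℕ × ℕ} (hp : p.1 ∉ V) :
    colCount (SS A H V) p = (H ∪ Acol A p.1).ncard := by
  unfold colCount
  congr 1
  ext k
  simp only [Set.mem_setOf_eq, Set.mem_union, mem_SS, mem_Acol]
  tauto

lemma Tstep (m n : ℕ) (A : Set (ℕ × ℕ)) (H V : Set ℕ) :
    T (Rect m n) (SS A H V) = SS A (H ∪ Gm m A V) (V ∪ Fn n A H) := by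
  ext p
  simp only [T, Set.mem_union, Set.mem_setOf_eq]
  constructor
  · rintro (hp | hp)
    · exact (SS_mono Set.subset_union_left Set.subset_union_left hp)
    · by_cases hH : p.2 ∈ H
      · exact mem_SS.mpr (Or.inr (Or.inl (Set.mem_union_left _ hH)))
      by_cases hV : p.1 ∈ V
      · exact mem_SS.mpr (Or.inr (Or.inr (Set.mem_union_left _ hV)))
      have hfire : m ≤ (V ∪ Arow A p.2).ncard ∨ n ≤ (H ∪ Acol A p.1).ncard := by
        by_contra hcon
        push_neg at hcon
        refine hp ⟨?_, ?_⟩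
        · rw [rowCount_SS hH]; exact hcon.1
        · rw [colCount_SS hV]; exact hcon.2
      rcases hfire with h | h
      · exact mem_SS.mpr (Or.inr (Or.inl (Set.mem_union_right _ h)))
      · exact mem_SS.mpr (Or.inr (Or.inr (Set.mem_union_right _ h)))
  · intro hp
    rcases mem_SS.mp hp with hA | hH | hV
    · exact Or.inl (mem_SS.mpr (Or.inl hA))
    · rcases hH with hH | hG
      · exact Or.inl (mem_SS.mpr (Or.inr (Or.inl hH)))
      · by_cases hs : p ∈ SS A H V
        · exact Or.inl hs
        · refine Or.inr fun hR => ?_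
          have hH' : p.2 ∉ H := fun h => hs (mem_SS.mpr (Or.inr (Or.inl h)))
          have h1 : rowCount (SS A H V) p < m := hR.1
          rw [rowCount_SS hH'] at h1
          exact absurd hG (by rw [mem_Gm]; omega)
    · rcases hV with hV | hF
      · exact Or.inl (mem_SS.mpr (Or.inr (Or.inr hV)))
      · by_cases hs : p ∈ SS A H V
        · exact Or.inl hs
        · refine Or.inr fun hR => ?_
          have hV' : p.1 ∉ V := fun h => hs (mem_SS.mpr (Or.inr (Or.inr h)))
          have h2 : colCount (SS A H V) p < n := hR.2
          rw [colCount_SS hV'] at h2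
          exact absurd hF (by rw [mem_Fn]; omega)

lemma arow_fin (hfin : A.Finite) (c : ℕ) : (Arow A c).Finite :=
  (hfin.image Prod.fst).subset fun k hk => ⟨(k, c), hk, rfl⟩

lemma acol_fin (hfin : A.Finite) (x : ℕ) : (Acol A x).Finite :=
  (hfin.image Prod.snd).subset fun k hk => ⟨(x, k), hk, rfl⟩

lemma gm_fin (hfin : A.Finite) {V : Set ℕ} (hV : ¬ m ≤ V.ncard) :
    (Gm m A V).Finite := by
  refine (hfin.image Prod.snd).subset fun c hc => ?_
  rcases Set.eq_empty_or_nonempty (Arow A c) with he | ⟨k, hk⟩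
  · rw [mem_Gm, he, Set.union_empty] at hc
    exact absurd hc hV
  · exact ⟨(k, c), hk, rfl⟩

lemma fn_fin (hfin : A.Finite) {H : Set ℕ} (hH : ¬ n ≤ H.ncard) :
    (Fn n A H).Finite := by
  refine (hfin.image Prod.fst).subset fun x hx => ?_
  rcases Set.eq_empty_or_nonempty (Acol A x) with he | ⟨k, hk⟩
  · rw [mem_Fn, he, Set.union_empty] at hx
    exact absurd hx hH
  · exact ⟨(x, k), hk, rfl⟩

lemma st_fin (hfin : A.Finite) :
    ∀ t, (∀ s, s < t → ¬ Done m n A s) →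
      ((st m n A t).1.Finite ∧ (st m n A t).2.Finite)
  | 0, _ => by simp [st]
  | t + 1, h => by
    have hD := h t (Nat.lt_succ_self t)
    rw [Done, not_or] at hD
    exact ⟨gm_fin hfin hD.2, fn_fin hfin hD.1⟩

lemma gm_mono (hfin : A.Finite) {V V' : Set ℕ} (hV' : V'.Finite) (h : V ⊆ V') :
    Gm m A V ⊆ Gm m A V' := fun c hc =>
  le_trans hc (Set.ncard_le_ncard (Set.union_subset_union_left _ h)
    (hV'.union (arow_fin hfin c)))

lemma fn_mono (hfin : A.Finite) {H H' : Set ℕ} (hH' : H'.Finite) (h : H ⊆ H') :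
    Fn n A H ⊆ Fn n A H' := fun x hx =>
  le_trans hx (Set.ncard_le_ncard (Set.union_subset_union_left _ h)
    (hH'.union (acol_fin hfin x)))

lemma mono_st (hfin : A.Finite) :
    ∀ t, (∀ s, s < t → ¬ Done m n A s) →
      ((st m n A t).1 ⊆ (st m n A (t + 1)).1 ∧
       (st m n A t).2 ⊆ (st m n A (t + 1)).2)
  | 0, _ => by simp [st]
  | t + 1, h => by
    have IH := mono_st hfin t (fun s hs => h s (hs.trans (Nat.lt_succ_self t)))
    have hfin' := st_fin hfin (t + 1) h
    exact ⟨gm_mono hfin hfin'.2 IH.2, fn_mono hfin hfin'.1 IH.1⟩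

lemma mono_st_le (hfin : A.Finite) {s t : ℕ} (hle : s ≤ t)
    (h : ∀ u, u < t → ¬ Done m n A u) :
    (st m n A s).1 ⊆ (st m n A t).1 ∧ (st m n A s).2 ⊆ (st m n A t).2 := by
  induction t, hle using Nat.le_induction with
  | base => exact ⟨subset_rfl, subset_rfl⟩
  | succ t hst IH =>
    have h' : ∀ u, u < t → ¬ Done m n A u :=
      fun u hu => h u (hu.trans (Nat.lt_succ_self t))
    have IH' := IH h'
    have hm := mono_st hfin t h'
    exact ⟨IH'.1.trans hm.1, IH'.2.trans hm.2⟩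

lemma bridge (hfin : A.Finite) :
    ∀ t, (∀ s, s < t → ¬ Done m n A s) →
      (T (Rect m n))^[t] A = SS A (st m n A t).1 (st m n A t).2
  | 0, _ => by simp [st, SS]
  | t + 1, h => by
    have IH := bridge hfin t (fun s hs => h s (hs.trans (Nat.lt_succ_self t)))
    have hm := mono_st hfin t (fun s hs => h s (hs.trans (Nat.lt_succ_self t)))
    have e1 : (st m n A t).1 ∪ Gm m A (st m n A t).2 = Gm m A (st m n A t).2 :=
      Set.union_eq_self_of_subset_left (stH_succ t ▸ hm.1)
    have e2 : (st m n A t).2 ∪ Fn n A (st m n A t).1 = Fn n A (st m n A t).1 :=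
      Set.union_eq_self_of_subset_left (stV_succ t ▸ hm.2)
    rw [Function.iterate_succ_apply', IH, Tstep, stH_succ, stV_succ, e1, e2]

lemma done_univ (hfin : A.Finite) (t : ℕ)
    (h : ∀ s, s < t → ¬ Done m n A s) (hD : Done m n A t) :
    (T (Rect m n))^[t + 1] A = Set.univ := by
  have hb := bridge hfin t h
  have hfin' := st_fin hfin t h
  rw [Function.iterate_succ_apply', hb, Tstep]
  apply Set.eq_univ_of_forall
  intro p
  rw [mem_SS]
  rcases hD with hD | hD
  · refine Or.inr (Or.inr (Set.mem_union_right _ ?_))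
    rw [mem_Fn]
    exact le_trans hD (Set.ncard_le_ncard Set.subset_union_left
      (hfin'.1.union (acol_fin hfin p.1)))
  · refine Or.inr (Or.inl (Set.mem_union_right _ ?_))
    rw [mem_Gm]
    exact le_trans hD (Set.ncard_le_ncard Set.subset_union_left
      (hfin'.2.union (arow_fin hfin p.2)))

lemma iter_mono (Z : Set (ℕ × ℕ)) (B : Set (ℕ × ℕ)) {s t : ℕ} (h : s ≤ t) :
    (T Z)^[s] B ⊆ (T Z)^[t] B := by
  induction t, h using Nat.le_induction with
  | base => exact subset_rfl
  | succ t hst IH =>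
    rw [Function.iterate_succ_apply']
    exact fun p hp => Set.mem_union_left _ (IH hp)

lemma stuck_False (hfin : A.Finite)
    (hspan : ∀ p : ℕ × ℕ, ∃ t, p ∈ (T (Rect m n))^[t] A)
    (t : ℕ) (hND : ∀ s, s ≤ t → ¬ Done m n A s)
    (hstk : st m n A (t + 1) = st m n A t) : False := by
  have heqs : ∀ k, st m n A (t + k) = st m n A t := by
    intro k
    induction k with
    | zero => rfl
    | succ k IH =>
      calc st m n A (t + k + 1)
          = (Gm m A (st m n A (t + k)).2, Fn n A (st m n A (t + k)).1) := rfl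
        _ = (Gm m A (st m n A t).2, Fn n A (st m n A t).1) := by rw [IH]
        _ = st m n A (t + 1) := rfl
        _ = st m n A t := hstk
  have hstall : ∀ s, t < s → st m n A s = st m n A t := by
    intro s hs
    have := heqs (s - t)
    rwa [Nat.add_sub_cancel' hs.le] at this
  have hNDall : ∀ s, ¬ Done m n A s := by
    intro s
    rcases le_or_gt s t with h | h
    · exact hND s h
    · have hiff : Done m n A s ↔ Done m n A t := by rw [Done, Done, hstall s h]
      exact fun hd => hND t le_rfl (hiff.mp hd)
  have hb : ∀ s, (T (Rect m n))^[s] A = SS A (st m n A s).1 (st m n A s).2 :=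
    fun s => bridge hfin s (fun u _ => hNDall u)
  have hsub : ∀ s, (st m n A s).1 ⊆ (st m n A t).1 ∧
      (st m n A s).2 ⊆ (st m n A t).2 := by
    intro s
    rcases le_or_gt s t with h | h
    · exact mono_st_le hfin h (fun u _ => hNDall u)
    · rw [hstall s h]
      exact ⟨subset_rfl, subset_rfl⟩
  have hfin' := st_fin hfin t (fun u _ => hNDall u)
  obtain ⟨c₀, hc₀⟩ := hfin'.1.infinite_compl.nonempty
  obtain ⟨x₀, hx₀⟩ := ((hfin'.2.union (hfin.image Prod.fst)).infinite_compl).nonempty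
  rw [Set.mem_compl_iff] at hc₀ hx₀
  obtain ⟨s, hp⟩ := hspan (x₀, c₀)
  rw [hb s, mem_SS] at hp
  rcases hp with h | h | h
  · exact hx₀ (Set.mem_union_right _ ⟨(x₀, c₀), h, rfl⟩)
  · exact hc₀ ((hsub s).1 h)
  · exact hx₀ (Set.mem_union_left _ ((hsub s).2 h))

lemma core (hfin : A.Finite) (N : ℕ)
    (hND : ∀ t, t ≤ 2 * N + 1 → ¬ Done m (N + 1) A t)
    (hstrict : ∀ t, t ≤ 2 * N + 1 →
      st m (N + 1) A (t + 1) ≠ st m (N + 1) A t) : False := by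
  have hfinst : ∀ t, t ≤ 2 * N + 2 →
      ((st m (N + 1) A t).1.Finite ∧ (st m (N + 1) A t).2.Finite) :=
    fun t ht => st_fin hfin t (fun s hs => hND s (by omega))
  have hmono : ∀ t, t ≤ 2 * N + 1 →
      ((st m (N + 1) A t).1 ⊆ (st m (N + 1) A (t + 1)).1 ∧
       (st m (N + 1) A t).2 ⊆ (st m (N + 1) A (t + 1)).2) :=
    fun t ht => mono_st hfin t (fun s hs => hND s (by omega))
  -- key cardinality growth: after 2t steps at least t full rows
  have hcard : ∀ t, t ≤ N → t ≤ ((st m (N + 1) A (2 * t)).1).ncard := by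
    intro t
    induction t with
    | zero => exact fun _ => Nat.zero_le _
    | succ t IH =>
      intro ht
      have IH' := IH (by omega)
      have hne : (st m (N + 1) A (2 * t + 1)).1 ≠ (st m (N + 1) A (2 * t)).1 ∨
          (st m (N + 1) A (2 * t + 2)).1 ≠ (st m (N + 1) A (2 * t + 1)).1 := by
        by_contra hcon
        push_neg at hcon
        apply hstrict (2 * t + 1) (by omega)
        have hV : (st m (N + 1) A (2 * t + 2)).2 = (st m (N + 1) A (2 * t + 1)).2 := by
          rw [stV_succ, stV_succ, hcon.1]
        exact Prod.ext_iff.mpr ⟨hcon.2, hV⟩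
      have hsub1 := (hmono (2 * t) (by omega)).1
      have hsub2 := (hmono (2 * t + 1) (by omega)).1
      have hf1 := (hfinst (2 * t + 1) (by omega)).1
      have hf2 := (hfinst (2 * t + 2) (by omega)).1
      have h1 : ((st m (N + 1) A (2 * t)).1).ncard <
          ((st m (N + 1) A (2 * t + 2)).1).ncard := by
        rcases hne with h | h
        · have hlt := Set.ncard_lt_ncard (ssubset_of_subset_of_ne hsub1 (Ne.symm h)) hf1
          exact lt_of_lt_of_le hlt (Set.ncard_le_ncard hsub2 hf2)
        · have hle := Set.ncard_le_ncard hsub1 hf1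
          have hlt := Set.ncard_lt_ncard (ssubset_of_subset_of_ne hsub2 (Ne.symm h)) hf2
          have hee : 2 * t + 1 + 1 = 2 * t + 2 := rfl
          rw [hee] at hlt
          omega
      have h2 : 2 * (t + 1) = 2 * t + 2 := by ring
      rw [h2]
      omega
  have hNcard := hcard N le_rfl
  have hHlast : ((st m (N + 1) A (2 * N + 1)).1).ncard < N + 1 := by
    have h := hND (2 * N + 1) le_rfl
    rw [Done, not_or] at h
    omega
  have heq : (st m (N + 1) A (2 * N + 1)).1 = (st m (N + 1) A (2 * N)).1 := by
    by_contra hne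
    have hsub := (hmono (2 * N) (by omega)).1
    have hf := (hfinst (2 * N + 1) (by omega)).1
    have := Set.ncard_lt_ncard (ssubset_of_subset_of_ne hsub (Ne.symm hne)) hf
    omega
  have hne2 : (st m (N + 1) A (2 * N + 2)).1 ≠ (st m (N + 1) A (2 * N + 1)).1 := by
    intro hH
    apply hstrict (2 * N + 1) le_rfl
    refine Prod.ext_iff.mpr ⟨hH, ?_⟩
    rw [stV_succ, heq, ← stV_succ]
  have hsub := (hmono (2 * N + 1) le_rfl).1
  obtain ⟨c, hcmem, hcnot⟩ :=
    Set.exists_of_ssubset (ssubset_of_subset_of_ne hsub (Ne.symm hne2))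
  rw [stH_succ] at hcmem
  have hc : m ≤ ((st m (N + 1) A (2 * N + 1)).2 ∪ Arow A c).ncard := mem_Gm.mp hcmem
  have hVcard : ¬ m ≤ ((st m (N + 1) A (2 * N + 1)).2).ncard := by
    have h := hND (2 * N + 1) le_rfl
    rw [Done, not_or] at h
    exact h.2
  have hrow : ¬ Arow A c ⊆ (st m (N + 1) A (2 * N + 1)).2 := by
    intro hsubr
    rw [Set.union_eq_self_of_subset_right hsubr] at hc
    exact hVcard hc
  obtain ⟨x, hxA, hxV⟩ := Set.not_subset.mp hrow
  have hxF : ¬ ((N + 1) ≤ ((st m (N + 1) A (2 * N)).1 ∪ Acol A x).ncard) := by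
    have hx' : x ∉ Fn (N + 1) A (st m (N + 1) A (2 * N)).1 := by
      rw [← stV_succ]; exact hxV
    exact fun h => hx' (mem_Fn.mpr h)
  have hcH : c ∉ (st m (N + 1) A (2 * N)).1 := fun h => hcnot (heq ▸ h)
  have hins : insert c (st m (N + 1) A (2 * N)).1 ⊆
      (st m (N + 1) A (2 * N)).1 ∪ Acol A x :=
    Set.insert_subset (Set.mem_union_right _ (mem_Acol.mpr (mem_Arow.mp hxA)))
      Set.subset_union_left
  have hfH := (hfinst (2 * N) (by omega)).1
  have h5 : ((st m (N + 1) A (2 * N)).1).ncard + 1 ≤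
      ((st m (N + 1) A (2 * N)).1 ∪ Acol A x).ncard := by
    rw [← Set.ncard_insert_of_notMem hcH hfH]
    exact Set.ncard_le_ncard hins (hfH.union (acol_fin hfin x))
  exact hxF (by omega)

end RectAux

theorem rect_spanning_time (m n : ℕ) (hmn : m > n) (hn : 1 ≤ n)
    (A : Set (ℕ × ℕ)) (hfin : A.Finite)
    (hspan : ∀ p : ℕ × ℕ, ∃ t, p ∈ (T (Rect m n))^[t] A) :
    (T (Rect m n))^[2 * n] A = Set.univ := by
  classical
  obtain ⟨N, rfl⟩ : ∃ N, n = N + 1 := ⟨n - 1, by omega⟩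
  by_cases hdone : ∃ t, t ≤ 2 * N + 1 ∧ RectAux.Done m (N + 1) A t
  · obtain ⟨t, htle, htD⟩ := hdone
    have hex : ∃ t, RectAux.Done m (N + 1) A t := ⟨t, htD⟩
    have hD := Nat.find_spec hex
    have hle : Nat.find hex ≤ t := Nat.find_min' hex htD
    have hND : ∀ s, s < Nat.find hex → ¬ RectAux.Done m (N + 1) A s :=
      fun s hs => Nat.find_min hex hs
    have huniv := RectAux.done_univ hfin (Nat.find hex) hND hD
    apply Set.eq_univ_of_univ_subset
    rw [← huniv]
    exact RectAux.iter_mono (Rect m (N + 1)) A (by omega)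
  · push_neg at hdone
    by_cases hstk : ∃ t, t ≤ 2 * N + 1 ∧
        RectAux.st m (N + 1) A (t + 1) = RectAux.st m (N + 1) A t
    · obtain ⟨t, htle, hst⟩ := hstk
      exact (RectAux.stuck_False hfin hspan t
        (fun s hs => hdone s (hs.trans htle)) hst).elim
    · push_neg at hstk
      exact (RectAux.core hfin N hdone hstk).elim
end

section
/- For positive integers a, b and k1, k2 ∈ N, the infimal sum of staircases satisfies S_{a,b,k1} ⊞ S_{a,b,k2} = S_{a,b,k1+k2}. -/
/-!
The complement of `S_{a,b,k}` (for `k ≥ 1`) is the superlevel set `{p | k ≤ φ p}` of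
`φ (i, j) = ⌊i/b⌋ + ⌊j/a⌋`, so it suffices that the superlevel sets of `φ` add up like their
levels. The inclusion `⊆` is the superadditivity of `φ`. For `⊇`, a point of level at least
`k₁ + k₂` is split coordinatewise, each floor quotient `⌊i/b⌋ ≥ m₁ + m₂` being realised by
`i = b m₁ + (i - b m₁)`; the levels `m₁ ≤ ⌊i/b⌋` and `k₁ - m₁ ≤ ⌊j/a⌋` are chosen with
`m₁ = min k₁ ⌊i/b⌋`.
-/

open Pointwise

def Staircase (a b k : ℕ) : Set (ℕ × ℕ) := {p | p.1 / b + p.2 / a ≤ k - 1}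

def SplitsLevels {M : Type*} [Add M] (φ : M → ℕ) : Prop :=
  ∀ x k₁ k₂, k₁ + k₂ ≤ φ x → ∃ y z, k₁ ≤ φ y ∧ k₂ ≤ φ z ∧ y + z = x

theorem Nat.splitsLevels_div (b : ℕ) : SplitsLevels (· / b) := by
  intro x k₁ k₂ h
  rcases Nat.eq_zero_or_pos b with rfl | hb
  · exact ⟨0, x, by simp_all, by simp_all, zero_add x⟩
  dsimp only at h ⊢
  have hle : b * k₁ ≤ x := (Nat.mul_le_mul_left b (by omega)).trans (Nat.mul_div_le x b)
  refine ⟨b * k₁, x - b * k₁, ?_, ?_, Nat.add_sub_cancel' hle⟩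
  · rw [Nat.mul_div_cancel_left k₁ hb]
  · rw [Nat.sub_mul_div]
    omega

theorem SplitsLevels.prod {M N : Type*} [Add M] [Add N] {φ : M → ℕ} {ψ : N → ℕ}
    (hφ : SplitsLevels φ) (hψ : SplitsLevels ψ) :
    SplitsLevels fun p : M × N ↦ φ p.1 + ψ p.2 := by
  rintro ⟨x, y⟩ k₁ k₂ h
  dsimp only at h
  generalize hm : min k₁ (φ x) = m
  obtain ⟨x₁, x₂, hx₁, hx₂, rfl⟩ := hφ x m (φ x - m) (by omega)
  obtain ⟨y₁, y₂, hy₁, hy₂, rfl⟩ := hψ y (k₁ - m) (ψ y - (k₁ - m)) (by omega)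
  exact ⟨(x₁, y₁), (x₂, y₂), by dsimp only; omega, by dsimp only; omega, rfl⟩

theorem setOf_le_add_setOf_le {M : Type*} [Add M] {φ : M → ℕ}
    (hφ : ∀ x y, φ x + φ y ≤ φ (x + y)) (hsplit : SplitsLevels φ) (k₁ k₂ : ℕ) :
    {x | k₁ ≤ φ x} + {x | k₂ ≤ φ x} = {x | k₁ + k₂ ≤ φ x} := by
  ext x
  simp only [Set.mem_add, Set.mem_ofPred_eq]
  constructor
  · rintro ⟨y, hy, z, hz, rfl⟩
    exact (add_le_add hy hz).trans (hφ y z)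
  · intro hx
    obtain ⟨y, z, hy, hz, rfl⟩ := hsplit x k₁ k₂ hx
    exact ⟨y, hy, z, hz, rfl⟩

theorem compl_staircase (a b : ℕ) {k : ℕ} (hk : 0 < k) :
    (Staircase a b k)ᶜ = {p | k ≤ p.1 / b + p.2 / a} := by
  ext p
  simp only [Staircase, Set.mem_compl_iff, Set.mem_ofPred_eq]
  omega

theorem staircase_boxSum_general (a b k₁ k₂ : ℕ)
    (hk₁ : 0 < k₁) (hk₂ : 0 < k₂) :
    boxSum (Staircase a b k₁) (Staircase a b k₂) = Staircase a b (k₁ + k₂) := by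
  have superadditive : ∀ p q : ℕ × ℕ,
      (p.1 / b + p.2 / a) + (q.1 / b + q.2 / a) ≤ (p + q).1 / b + (p + q).2 / a := by
    intro p q
    rw [add_add_add_comm]
    exact add_le_add Nat.div_add_div_le_add_div Nat.div_add_div_le_add_div
  have splits : SplitsLevels fun p : ℕ × ℕ ↦ p.1 / b + p.2 / a :=
    (Nat.splitsLevels_div b).prod (Nat.splitsLevels_div a)
  rw [boxSum, compl_staircase a b hk₁, compl_staircase a b hk₂,
    setOf_le_add_setOf_le superadditive splits, ← compl_staircase a b (by omega), compl_compl]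

theorem staircase_boxSum (a b k₁ k₂ : ℕ) (ha : 0 < a) (hb : 0 < b)
    (hk₁ : 0 < k₁) (hk₂ : 0 < k₂) :
    boxSum (Staircase a b k₁) (Staircase a b k₂) = Staircase a b (k₁ + k₂) :=
  staircase_boxSum_general a b k₁ k₂ hk₁ hk₂
end
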